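/- Let (W,w) and (V,v) be Bessel fusion sequences in H, let 𝓕_i = {f_i^l}_{l∈L_i} be a frame for W_i and 𝓖_i = {g_i^l}_{l∈L_i} a frame for V_i, with the same finite index sets L_i, for i = 1,…,m. Then the following are equivalent: (1) the families w𝓕 = {w_i f_i^l}_{i,l} and v𝓖 = {v_i g_i^l}_{i,l} are dual frames for H; (2) T_{V,v} C_𝓖 C_𝓕* T*_{W,w} = I_H, i.e., (V,v,𝓖) is a dual fusion frame system of (W,w,𝓕). -/

import Mathlib

/-! Since `π_{Wᵢ}` is self-adjoint and `fᵢˡ ∈ Wᵢ`, the operator `T_{V,v} C_𝓖 C*_𝓕 T*_{W,w}` sends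
`f` to `Σᵢ Σₗ ⟨wᵢ fᵢˡ, f⟩ vᵢ gᵢˡ`, so (2) is exactly the reconstruction formula of (1). That formula
alone forces both families to span `H`: `v𝓖` because every `f` is a combination of it, and `w𝓕`
because a vector orthogonal to all of `w𝓕` reconstructs to `0`. -/

noncomputable section

open scoped InnerProductSpace

variable {𝕜 : Type} [RCLike 𝕜]
variable {H : Type} [NormedAddCommGroup H] [InnerProductSpace 𝕜 H] [FiniteDimensional 𝕜 H]
variable {m : ℕ}

/-- The Hilbert space `𝒲 = ⊕ᵢ Wᵢ` of a fusion sequence, with the ℓ² inner product. -/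
abbrev FFSpace (W : Fin m → Submodule 𝕜 H) : Type := PiLp 2 (fun i => ↥(W i))

/-- The synthesis operator `T_{W,w} : 𝒲 → H`, `(fᵢ)ᵢ ↦ Σᵢ wᵢ fᵢ`. -/
def synthOp (W : Fin m → Submodule 𝕜 H) (w : Fin m → ℝ) : FFSpace W →ₗ[𝕜] H where
  toFun f := ∑ i, (w i : 𝕜) • (f i : H)
  map_add' f g := by
    simp [Finset.sum_add_distrib, smul_add]
  map_smul' c f := by
    simp [Finset.smul_sum]
    congr 1; funext i; rw [smul_comm]

/-- The analysis operator `T*_{W,w} : H → 𝒲`, `f ↦ (wᵢ π_{Wᵢ} f)ᵢ`. -/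
def analysisOp (W : Fin m → Submodule 𝕜 H) (w : Fin m → ℝ) : H →ₗ[𝕜] FFSpace W where
  toFun f := WithLp.toLp 2 (fun i => (w i : 𝕜) • (Submodule.orthogonalProjection (W i) f))
  map_add' f g := by
    ext i; simp [smul_add]
  map_smul' c f := by
    ext i; simp; rw [smul_comm]

/-- The coordinate operator `M_{J,W} : 𝒲 → 𝒲`, keeping the coordinates in `J`. -/
def MJ (W : Fin m → Submodule 𝕜 H) (J : Finset (Fin m)) : FFSpace W →ₗ[𝕜] FFSpace W where
  toFun f := WithLp.toLp 2 (fun j => if j ∈ J then f j else 0)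
  map_add' f g := by
    ext j; by_cases h : j ∈ J <;> simp [h]
  map_smul' c f := by
    ext j; by_cases h : j ∈ J <;> simp [h]

/-- `Q : 𝒲 → 𝒱` is block-diagonal if `Q M_{j,W} 𝒲 ⊆ M_{j,V} 𝒱` for all `j`. -/
def IsBlockDiagonal (W V : Fin m → Submodule 𝕜 H) (Q : FFSpace W →ₗ[𝕜] FFSpace V) : Prop :=
  ∀ j, LinearMap.range (Q ∘ₗ MJ W {j}) ≤ LinearMap.range (MJ V {j})

/-- `Q : 𝒲 → 𝒱` is component preserving if `Q M_{j,W} 𝒲 = M_{j,V} 𝒱` for all `j`. -/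
def IsComponentPreserving (W V : Fin m → Submodule 𝕜 H) (Q : FFSpace W →ₗ[𝕜] FFSpace V) : Prop :=
  ∀ j, LinearMap.range (Q ∘ₗ MJ W {j}) = LinearMap.range (MJ V {j})

/-- The orthogonal projection onto `U` as an endomorphism of `H`. -/
def projL (U : Submodule 𝕜 H) : H →ₗ[𝕜] H :=
  U.subtype ∘ₗ (Submodule.orthogonalProjection U : H →L[𝕜] U).toLinearMap

/-- The coefficient space `⊕ᵢ 𝔽^{Lᵢ}`. -/
abbrev CoefSpace (𝕜 : Type) [RCLike 𝕜] {m : ℕ} (L : Fin m → Type) [∀ i, Fintype (L i)] : Type :=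
  PiLp 2 (fun i => EuclideanSpace 𝕜 (L i))

/-- The operator `C_𝓕 : ⊕ᵢ 𝔽^{Lᵢ} → 𝒲`, `((xᵢˡ)ₗ)ᵢ ↦ (Σₗ xᵢˡ fᵢˡ)ᵢ`, associated to a family
of local frames `𝓕ᵢ = {fᵢˡ}ₗ ⊂ Wᵢ`. -/
def CFop (W : Fin m → Submodule 𝕜 H) (L : Fin m → Type) [∀ i, Fintype (L i)]
    (F : ∀ i, L i → ↥(W i)) : CoefSpace 𝕜 L →ₗ[𝕜] FFSpace W where
  toFun x := WithLp.toLp 2 (fun i => ∑ l, x i l • F i l)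
  map_add' x y := by
    ext i
    simp [Finset.sum_add_distrib, add_smul]
  map_smul' c x := by
    ext i
    simp [Finset.smul_sum, smul_smul]

/-- The adjoint `C*_𝓕 : 𝒲 → ⊕ᵢ 𝔽^{Lᵢ}`, `(gᵢ)ᵢ ↦ ((⟨fᵢˡ, gᵢ⟩)ₗ)ᵢ` (inner products taken in
Mathlib's convention, conjugate-linear in the first variable). -/
def CFadj (W : Fin m → Submodule 𝕜 H) (L : Fin m → Type) [∀ i, Fintype (L i)]
    (F : ∀ i, L i → ↥(W i)) : FFSpace W →ₗ[𝕜] CoefSpace 𝕜 L where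
  toFun g := WithLp.toLp 2 (fun i => WithLp.toLp 2 (fun l => (inner 𝕜 (F i l) (g i) : 𝕜)))
  map_add' x y := by
    ext i l
    simp [inner_add_right]
  map_smul' c x := by
    ext i l
    simp [inner_smul_right]

section Reconstruction

variable {E : Type*} [NormedAddCommGroup E] [InnerProductSpace 𝕜 E]
  {ι : Type*} [Fintype ι] {κ : ι → Type*} [∀ i, Fintype (κ i)] {h h' : ∀ i, κ i → E}

lemma span_iUnion_range_eq_top_of_reconstruction_right
    (hrec : ∀ f : E, ∑ i, ∑ l, (inner 𝕜 (h i l) f : 𝕜) • h' i l = f) :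
    Submodule.span 𝕜 (⋃ i, Set.range (h' i)) = ⊤ := by
  refine eq_top_iff.2 fun f _ => hrec f ▸ Submodule.sum_mem _ fun i _ => ?_
  exact Submodule.sum_mem _ fun l _ =>
    Submodule.smul_mem _ _ (Submodule.subset_span (Set.mem_iUnion.2 ⟨i, l, rfl⟩))

lemma span_iUnion_range_eq_top_of_reconstruction_left [FiniteDimensional 𝕜 E]
    (hrec : ∀ f : E, ∑ i, ∑ l, (inner 𝕜 (h i l) f : 𝕜) • h' i l = f) :
    Submodule.span 𝕜 (⋃ i, Set.range (h i)) = ⊤ := by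
  refine Submodule.orthogonal_eq_bot_iff.1 (Submodule.eq_bot_iff _ |>.2 fun x hx => ?_)
  rw [← hrec x]
  refine Finset.sum_eq_zero fun i _ => Finset.sum_eq_zero fun l _ => ?_
  have hmem : h i l ∈ Submodule.span 𝕜 (⋃ i, Set.range (h i)) :=
    Submodule.subset_span (Set.mem_iUnion.2 ⟨i, l, rfl⟩)
  rw [Submodule.inner_right_of_mem_orthogonal hmem hx, zero_smul]

end Reconstruction

lemma synthOp_comp_CFop_comp_CFadj_comp_analysisOp_apply
    (W V : Fin m → Submodule 𝕜 H) (w v : Fin m → ℝ) (L : Fin m → Type) [∀ i, Fintype (L i)]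
    (F : ∀ i, L i → ↥(W i)) (G : ∀ i, L i → ↥(V i)) (f : H) :
    (synthOp V v ∘ₗ CFop V L G ∘ₗ CFadj W L F ∘ₗ analysisOp W w) f
      = ∑ i, ∑ l, (inner 𝕜 ((w i : 𝕜) • (F i l : H)) f : 𝕜) • ((v i : 𝕜) • (G i l : H)) := by
  simp only [LinearMap.comp_apply, synthOp, CFop, CFadj, analysisOp, LinearMap.coe_mk,
    AddHom.coe_mk]
  refine Finset.sum_congr rfl fun i _ => ?_
  push_cast [Submodule.coe_sum, Finset.smul_sum]
  refine Finset.sum_congr rfl fun l _ => ?_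
  rw [inner_smul_right, Submodule.inner_orthogonalProjectionOnto_eq_of_mem_left, inner_smul_left,
    RCLike.conj_ofReal, smul_smul, smul_smul, mul_comm]

theorem dual_frames_iff_dual_fusion_frame_system_general
    {𝕜 : Type} [RCLike 𝕜] {H : Type} [NormedAddCommGroup H] [InnerProductSpace 𝕜 H]
    [FiniteDimensional 𝕜 H] {m : ℕ}
    (W V : Fin m → Submodule 𝕜 H) (w v : Fin m → ℝ)
    (L : Fin m → Type) [∀ i, Fintype (L i)]
    (F : ∀ i, L i → ↥(W i)) (G : ∀ i, L i → ↥(V i)) :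
    ((Submodule.span 𝕜 (⋃ i, Set.range (fun l => (w i : 𝕜) • (F i l : H))) = ⊤) ∧
     (Submodule.span 𝕜 (⋃ i, Set.range (fun l => (v i : 𝕜) • (G i l : H))) = ⊤) ∧
     (∀ f : H, ∑ i, ∑ l, (inner 𝕜 ((w i : 𝕜) • (F i l : H)) f : 𝕜) • ((v i : 𝕜) • (G i l : H)) = f))
    ↔ synthOp V v ∘ₗ CFop V L G ∘ₗ CFadj W L F ∘ₗ analysisOp W w = LinearMap.id := by
  simp only [LinearMap.ext_iff, synthOp_comp_CFop_comp_CFadj_comp_analysisOp_apply,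
    LinearMap.id_apply]
  exact ⟨fun hdual => hdual.2.2, fun hrec => ⟨span_iUnion_range_eq_top_of_reconstruction_left hrec,
    span_iUnion_range_eq_top_of_reconstruction_right hrec, hrec⟩⟩

/-- for Bessel fusion sequences `(W,w)`, `(V,v)` with local frames
`𝓕ᵢ ⊂ Wᵢ`, `𝓖ᵢ ⊂ Vᵢ` on common index sets, the weighted families `w𝓕` and `v𝓖` are dual
frames for `H` iff `(V,v,𝓖)` is a dual fusion frame system of `(W,w,𝓕)`,
i.e. `T_{V,v} C_𝓖 C*_𝓕 T*_{W,w} = I`. -/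
theorem dual_frames_iff_dual_fusion_frame_system
    {𝕜 : Type} [RCLike 𝕜] {H : Type} [NormedAddCommGroup H] [InnerProductSpace 𝕜 H]
    [FiniteDimensional 𝕜 H] {m : ℕ}
    (W V : Fin m → Submodule 𝕜 H) (w v : Fin m → ℝ)
    (hw : ∀ i, 0 < w i) (hv : ∀ i, 0 < v i)
    (L : Fin m → Type) [∀ i, Fintype (L i)]
    (F : ∀ i, L i → ↥(W i)) (G : ∀ i, L i → ↥(V i))
    (hF : ∀ i, Submodule.span 𝕜 (Set.range (F i)) = ⊤)
    (hG : ∀ i, Submodule.span 𝕜 (Set.range (G i)) = ⊤) :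
    ((Submodule.span 𝕜 (⋃ i, Set.range (fun l => (w i : 𝕜) • (F i l : H))) = ⊤) ∧
     (Submodule.span 𝕜 (⋃ i, Set.range (fun l => (v i : 𝕜) • (G i l : H))) = ⊤) ∧
     (∀ f : H, ∑ i, ∑ l, (inner 𝕜 ((w i : 𝕜) • (F i l : H)) f : 𝕜) • ((v i : 𝕜) • (G i l : H)) = f))
    ↔ synthOp V v ∘ₗ CFop V L G ∘ₗ CFadj W L F ∘ₗ analysisOp W w = LinearMap.id :=
  dual_frames_iff_dual_fusion_frame_system_general W V w v L F G
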